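/- Let F = x₁x₅² + x₅x₃² + x₃x₄² + x₄x₂² + x₂x₁² be the Klein cubic form, a homogeneous polynomial of degree 3 in the variables x₁,…,x₅ over ℂ. Then the cubic threefold {F = 0} ⊂ P⁴ is smooth; equivalently, the only point a ∈ ℂ⁵ at which all five partial derivatives ∂F/∂xᵢ (i = 1,…,5) vanish simultaneously is a = 0. -/
import Mathlib


open MvPolynomial

/-- The Klein cubic form `x₁x₅² + x₅x₃² + x₃x₄² + x₄x₂² + x₂x₁²`, where `xᵢ`
is the variable `X (i-1) : MvPolynomial (Fin 5) ℂ`. -/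
noncomputable def kleinCubic : MvPolynomial (Fin 5) ℂ :=
  X 0 * X 4 ^ 2 + X 4 * X 2 ^ 2 + X 2 * X 3 ^ 2 + X 3 * X 1 ^ 2 + X 1 * X 0 ^ 2

/-- The Klein cubic threefold is smooth: the only point of `ℂ⁵` at which all
five partial derivatives of the Klein cubic form vanish is the origin. -/
theorem kleinCubic_smooth (a : Fin 5 → ℂ)
    (h : ∀ i : Fin 5, MvPolynomial.eval a (MvPolynomial.pderiv i kleinCubic) = 0) :
    a = 0 := by
  have h0 := h 0
  have h1 := h 1
  have h2 := h 2
  have h3 := h 3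
  have h4 := h 4
  simp only [kleinCubic, map_add, pderiv_mul, pderiv_pow, pderiv_X, map_mul, map_pow] at h0 h1 h2 h3 h4
  simp at h0 h1 h2 h3 h4
  -- h0 : a 4 ^ 2 + a 1 * (2 * a 0) = 0, etc.
  have p0 : a 4 ^ 2 = -(2 * a 1 * a 0) := by linear_combination h0
  have p1 : a 0 ^ 2 = -(2 * a 3 * a 1) := by linear_combination h1
  have p2 : a 3 ^ 2 = -(2 * a 4 * a 2) := by linear_combination h2
  have p3 : a 1 ^ 2 = -(2 * a 2 * a 3) := by linear_combination h3
  have p4 : a 2 ^ 2 = -(2 * a 0 * a 4) := by linear_combination h4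
  have e : (a 4 ^ 2) * (a 0 ^ 2) * (a 3 ^ 2) * (a 1 ^ 2) * (a 2 ^ 2)
      = (-(2 * a 1 * a 0)) * (-(2 * a 3 * a 1)) * (-(2 * a 4 * a 2)) *
        (-(2 * a 2 * a 3)) * (-(2 * a 0 * a 4)) := by rw [p0, p1, p2, p3, p4]
  have key : (a 0 * a 1 * a 2 * a 3 * a 4) ^ 2 = 0 := by
    linear_combination (1 / 33 : ℂ) * e
  have hP : a 0 * a 1 * a 2 * a 3 * a 4 = 0 := by
    exact sq_eq_zero_iff.mp key
  -- zero propagation helpers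
  have prop0 : a 0 = 0 → a 1 = 0 ∧ a 2 = 0 ∧ a 3 = 0 ∧ a 4 = 0 := by
    intro z0
    have z4 : a 4 = 0 := sq_eq_zero_iff.mp (by linear_combination h0 - 2 * a 1 * z0)
    have z2 : a 2 = 0 := sq_eq_zero_iff.mp (by linear_combination h4 - 2 * a 4 * z0)
    have z3 : a 3 = 0 := sq_eq_zero_iff.mp (by linear_combination h2 - 2 * a 4 * z2)
    have z1 : a 1 = 0 := sq_eq_zero_iff.mp (by linear_combination h3 - 2 * a 2 * z3)
    exact ⟨z1, z2, z3, z4⟩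
  have all0 : a 0 = 0 ∧ a 1 = 0 ∧ a 2 = 0 ∧ a 3 = 0 ∧ a 4 = 0 := by
    rcases mul_eq_zero.mp hP with h' | z4
    · rcases mul_eq_zero.mp h' with h' | z3
      · rcases mul_eq_zero.mp h' with h' | z2
        · rcases mul_eq_zero.mp h' with z0 | z1
          · exact ⟨z0, prop0 z0⟩
          · -- a 1 = 0: then a 4 ^2 = -2 a1 a0 = 0, a0^2 = -2 a3 a1 = 0
            have z0 : a 0 = 0 := sq_eq_zero_iff.mp (by linear_combination h1 - 2 * a 3 * z1)
            exact ⟨z0, prop0 z0⟩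
        · -- a 2 = 0: a 3^2 = -2 a4 a2 = 0
          have z3 : a 3 = 0 := sq_eq_zero_iff.mp (by linear_combination h2 - 2 * a 4 * z2)
          have z0 : a 0 = 0 := sq_eq_zero_iff.mp (by linear_combination h1 - 2 * a 1 * z3)
          exact ⟨z0, prop0 z0⟩
      · -- a 3 = 0
        have z0 : a 0 = 0 := sq_eq_zero_iff.mp (by linear_combination h1 - 2 * a 1 * z3)
        exact ⟨z0, prop0 z0⟩
    · -- a 4 = 0: a 2^2 = -2 a0 a4 = 0
      have z2 : a 2 = 0 := sq_eq_zero_iff.mp (by linear_combination h4 - 2 * a 0 * z4)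
      have z3 : a 3 = 0 := sq_eq_zero_iff.mp (by linear_combination h2 - 2 * a 4 * z2)
      have z0 : a 0 = 0 := sq_eq_zero_iff.mp (by linear_combination h1 - 2 * a 1 * z3)
      exact ⟨z0, prop0 z0⟩
  obtain ⟨z0, z1, z2, z3, z4⟩ := all0
  funext i
  fin_cases i <;> simpa
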